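/- arXiv:2405.15983 — 3 statements merged into one kernel-verified Lean document; each statement's English description precedes it below -/
import Mathlib

section
/- Let T be an HC tree of order n produced by some execution of the average link algorithm for a symmetric similarity function w : {1,…,n}×{1,…,n} → ℝ≥0. Then rev(T) ≥ ((n−2)/3) · Σ_{i<j} w(i,j). -/
/-- A (rooted, full) binary tree with leaves labeled by elements of `α`. -/
inductive HCTree (α : Type) : Type
  | leaf : α → HCTree α
  | node : HCTree α → HCTree α → HCTree α
  deriving DecidableEq

namespace HCTree

variable {α : Type} [DecidableEq α]

/-- The set of leaf labels of a tree. -/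
def leaves : HCTree α → Finset α
  | leaf a => {a}
  | node l r => leaves l ∪ leaves r

/-- The tree is a valid HC tree: all leaf labels are pairwise distinct. -/
def Proper : HCTree α → Prop
  | leaf _ => True
  | node l r => Proper l ∧ Proper r ∧ Disjoint (leaves l) (leaves r)

/-- The number of leaves of the subtree rooted at the lowest common ancestor
of the leaves `i` and `j` (i.e. `|T_{i,j}|`). -/
def lcaSize : HCTree α → α → α → ℕ
  | leaf _, _, _ => 1
  | node l r, i, j =>
      if i ∈ leaves l ∧ j ∈ leaves l then lcaSize l i j
      else if i ∈ leaves r ∧ j ∈ leaves r then lcaSize r i j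
      else (leaves l ∪ leaves r).card

/-- `Σ_{i<j, i,j ∈ L} w i j`. -/
noncomputable def pairsSum [LinearOrder α] (w : α → α → ℝ) (L : Finset α) : ℝ :=
  ∑ i ∈ L, ∑ j ∈ L, if i < j then w i j else 0

/-- Moseley–Wang revenue of `T` with respect to its own leaf set:
`rev(T) = Σ_{i<j} w(i,j) (|L| - |T_{i,j}|)`. -/
noncomputable def rev [LinearOrder α] (w : α → α → ℝ) (T : HCTree α) : ℝ :=
  ∑ i ∈ T.leaves, ∑ j ∈ T.leaves,
    if i < j then w i j * ((T.leaves.card : ℝ) - (T.lcaSize i j : ℝ)) else 0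

/-- Dasgupta cost: `cost(T) = Σ_{i<j} w(i,j) |T_{i,j}|`. -/
noncomputable def cost [LinearOrder α] (w : α → α → ℝ) (T : HCTree α) : ℝ :=
  ∑ i ∈ T.leaves, ∑ j ∈ T.leaves,
    if i < j then w i j * (T.lcaSize i j : ℝ) else 0

/-- `w(A,B) = Σ_{i∈A, j∈B} w(i,j)`. -/
noncomputable def wSet (w : α → α → ℝ) (A B : Finset α) : ℝ := ∑ i ∈ A, ∑ j ∈ B, w i j

/-- One-hole contexts for `HCTree`. -/
inductive Ctx (α : Type) : Type
  | hole : Ctx α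
  | nodeL : Ctx α → HCTree α → Ctx α
  | nodeR : HCTree α → Ctx α → Ctx α

/-- Filling the hole of a context with a tree. -/
def Ctx.fill {α : Type} : Ctx α → HCTree α → HCTree α
  | Ctx.hole, T => T
  | Ctx.nodeL K r, T => node (Ctx.fill K T) r
  | Ctx.nodeR l K, T => node l (Ctx.fill K T)

/-- Equality of HC trees as *unordered* trees (children of a node are unordered). -/
inductive TEq : HCTree α → HCTree α → Prop
  | leaf (a : α) : TEq (leaf a) (leaf a)
  | node {l r l' r' : HCTree α} : TEq l l' → TEq r r' → TEq (node l r) (node l' r')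
  | swap {l r l' r' : HCTree α} : TEq l r' → TEq r l' → TEq (node l r) (node l' r')

/-- `T'` is obtained from `T` by a single interchange operation: at an edge `(x,y)`
where `x` is internal with parent `y`, the subtrees rooted at the children of `x`
have leaf sets `A` and `B`, and the other child of `y` has leaf set `C`; the
operation swaps the `B`-subtree with the `C`-subtree, or the `A`-subtree with
the `C`-subtree. -/
def Interchange {α : Type} (T T' : HCTree α) : Prop :=
  ∃ (K : Ctx α) (A B C : HCTree α),
    T = K.fill (node (node A B) C) ∧
    (T' = K.fill (node (node A C) B) ∨ T' = K.fill (node (node C B) A))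

/-- `T` is locally optimal: no interchange, performed on any presentation `S` of
`T` as an unordered tree, strictly increases the revenue. -/
def LocalOpt [LinearOrder α] (w : α → α → ℝ) (T : HCTree α) : Prop :=
  ∀ S S' : HCTree α, TEq T S → Interchange S S' → rev w S' ≤ rev w T

/-- One step of local search: an interchange, up to unordered-tree equality. -/
def IStep (T T' : HCTree α) : Prop :=
  ∃ S S' : HCTree α, TEq T S ∧ Interchange S S' ∧ TEq S' T'

/-- The interchange distance: minimum number of interchange operations needed to
convert `T₁` into `T₂` (as unordered trees). -/
noncomputable def idist (T₁ T₂ : HCTree α) : ℕ :=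
  sInf {k : ℕ | ∃ f : ℕ → HCTree α, f 0 = T₁ ∧ TEq (f k) T₂ ∧
    ∀ i < k, IStep (f i) (f (i + 1))}

/-- The total cost of all merges of `T`: the sum over internal nodes, with
children leaf sets `A`, `B`, of `(|A|+|B|)·w(A,B)`. -/
noncomputable def mergeCostSum (w : α → α → ℝ) : HCTree α → ℝ
  | leaf _ => 0
  | node l r => mergeCostSum w l + mergeCostSum w r
      + ((l.leaves.card : ℝ) + (r.leaves.card : ℝ)) * wSet w l.leaves r.leaves

/-- The total revenue of all merges of `T` in a tree of order `n`: the sum over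
internal nodes, with children leaf sets `A`, `B`, of `(n-|A|-|B|)·w(A,B)`. -/
noncomputable def mergeRevSum (w : α → α → ℝ) (n : ℕ) : HCTree α → ℝ
  | leaf _ => 0
  | node l r => mergeRevSum w n l + mergeRevSum w n r
      + ((n : ℝ) - (l.leaves.card : ℝ) - (r.leaves.card : ℝ)) * wSet w l.leaves r.leaves

/-- Average similarity between two clusters. -/
noncomputable def sim (w : α → α → ℝ) (A B : Finset α) : ℝ :=
  wSet w A B / ((A.card : ℝ) * (B.card : ℝ))

/-- The forests (partial hierarchies) reachable by the average link algorithm: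
start from singletons, and repeatedly merge two clusters of maximal average
similarity. -/
inductive AvgLinkForest [Fintype α] (w : α → α → ℝ) : Finset (HCTree α) → Prop
  | init : AvgLinkForest w (Finset.univ.image (leaf : α → HCTree α))
  | merge {F : Finset (HCTree α)} {A B : HCTree α} :
      AvgLinkForest w F → A ∈ F → B ∈ F → A ≠ B →
      (∀ X ∈ F, ∀ Y ∈ F, X ≠ Y → sim w X.leaves Y.leaves ≤ sim w A.leaves B.leaves) →
      AvgLinkForest w (insert (node A B) ((F.erase A).erase B))

/-- `T` is produced by some execution of the average link algorithm. -/
def AvgLinkTree [Fintype α] (w : α → α → ℝ) (T : HCTree α) : Prop :=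
  AvgLinkForest w {T}


variable {n : ℕ}

lemma wSet_nonneg (w : Fin n → Fin n → ℝ) (hnn : ∀ i j, 0 ≤ w i j) (A B : Finset (Fin n)) :
    0 ≤ wSet w A B :=
  Finset.sum_nonneg fun _ _ => Finset.sum_nonneg fun _ _ => hnn _ _

lemma wSet_comm (w : Fin n → Fin n → ℝ) (hsym : ∀ i j, w i j = w j i) (A B : Finset (Fin n)) :
    wSet w A B = wSet w B A := by
  rw [wSet, wSet, Finset.sum_comm]
  exact Finset.sum_congr rfl fun i _ => Finset.sum_congr rfl fun j _ => hsym j i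

lemma wSet_union_right (w : Fin n → Fin n → ℝ) (A : Finset (Fin n)) {B C : Finset (Fin n)}
    (h : Disjoint B C) : wSet w A (B ∪ C) = wSet w A B + wSet w A C := by
  simp [wSet, Finset.sum_union h, Finset.sum_add_distrib]

lemma wSet_union_left (w : Fin n → Fin n → ℝ) {A B : Finset (Fin n)} (C : Finset (Fin n))
    (h : Disjoint A B) : wSet w (A ∪ B) C = wSet w A C + wSet w B C := by
  simp [wSet, Finset.sum_union h]

lemma wSet_biUnion_right (w : Fin n → Fin n → ℝ) (A : Finset (Fin n))
    (S : Finset (HCTree (Fin n))) (h : (S : Set (HCTree (Fin n))).PairwiseDisjoint leaves) :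
    wSet w A (S.biUnion leaves) = ∑ C ∈ S, wSet w A C.leaves := by
  rw [wSet, Finset.sum_comm, Finset.sum_biUnion h]
  exact Finset.sum_congr rfl fun C _ => by rw [wSet, Finset.sum_comm]

lemma cross_sum (w : Fin n → Fin n → ℝ) (hsym : ∀ i j, w i j = w j i)
    {L R : Finset (Fin n)} (h : Disjoint L R) :
    ((∑ i ∈ L, ∑ j ∈ R, if i < j then w i j else 0)
      + ∑ i ∈ R, ∑ j ∈ L, if i < j then w i j else 0) = wSet w L R := by
  rw [Finset.sum_comm (s := R) (t := L), ← Finset.sum_add_distrib]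
  rw [wSet]
  refine Finset.sum_congr rfl fun i hi => ?_
  rw [← Finset.sum_add_distrib]
  refine Finset.sum_congr rfl fun j hj => ?_
  have hij : i ≠ j := fun e => (Finset.disjoint_left.mp h hi) (e ▸ hj)
  rcases lt_trichotomy i j with hlt | heq | hgt
  · rw [if_pos hlt, if_neg (not_lt.mpr hlt.le), add_zero]
  · exact absurd heq hij
  · rw [if_neg (not_lt.mpr hgt.le), if_pos hgt, zero_add, hsym j i]

lemma pairsSum_union (w : Fin n → Fin n → ℝ) (hsym : ∀ i j, w i j = w j i)
    {L R : Finset (Fin n)} (h : Disjoint L R) :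
    pairsSum w (L ∪ R) = pairsSum w L + pairsSum w R + wSet w L R := by
  have hc := cross_sum w hsym h
  rw [pairsSum, Finset.sum_union h]
  simp only [Finset.sum_union h, Finset.sum_add_distrib]
  rw [pairsSum, pairsSum]
  linarith

variable {n : ℕ}

lemma cost_eq_mergeCostSum (w : Fin n → Fin n → ℝ) (hsym : ∀ i j, w i j = w j i) :
    ∀ (T : HCTree (Fin n)), Proper T → cost w T = mergeCostSum w T
  | leaf a, _ => by simp [cost, mergeCostSum, leaves]
  | node l r, ⟨hl, hr, hd⟩ => by
    have key : cost w (node l r) = cost w l + cost w r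
        + ((l.leaves.card : ℝ) + (r.leaves.card : ℝ)) * wSet w l.leaves r.leaves := by
      rw [cost, leaves, Finset.sum_union hd]
      simp only [Finset.sum_union hd, Finset.sum_add_distrib]
      have h1 : ∀ i ∈ l.leaves, ∀ j ∈ l.leaves,
          (if i < j then w i j * ((node l r).lcaSize i j : ℝ) else 0)
            = (if i < j then w i j * (l.lcaSize i j : ℝ) else 0) := by
        intro i hi j hj
        simp only [lcaSize, if_pos (⟨hi, hj⟩ : i ∈ l.leaves ∧ j ∈ l.leaves)]
      have h2 : ∀ i ∈ r.leaves, ∀ j ∈ r.leaves,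
          (if i < j then w i j * ((node l r).lcaSize i j : ℝ) else 0)
            = (if i < j then w i j * (r.lcaSize i j : ℝ) else 0) := by
        intro i hi j hj
        have hil : i ∉ l.leaves := Finset.disjoint_right.mp hd hi
        simp only [lcaSize, if_neg (fun h : _ ∧ _ => hil h.1),
          if_pos (⟨hi, hj⟩ : i ∈ r.leaves ∧ j ∈ r.leaves)]
      have h3 : ∀ i ∈ l.leaves, ∀ j ∈ r.leaves,
          (if i < j then w i j * ((node l r).lcaSize i j : ℝ) else 0)
            = ((l.leaves.card : ℝ) + (r.leaves.card : ℝ)) * (if i < j then w i j else 0) := by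
        intro i hi j hj
        have hjl : j ∉ l.leaves := Finset.disjoint_right.mp hd hj
        have hir : i ∉ r.leaves := Finset.disjoint_left.mp hd hi
        simp only [lcaSize, if_neg (fun h : _ ∧ _ => hjl h.2), if_neg (fun h : _ ∧ _ => hir h.1)]
        rw [Finset.card_union_of_disjoint hd]
        split <;> push_cast <;> ring
      have h4 : ∀ i ∈ r.leaves, ∀ j ∈ l.leaves,
          (if i < j then w i j * ((node l r).lcaSize i j : ℝ) else 0)
            = ((l.leaves.card : ℝ) + (r.leaves.card : ℝ)) * (if i < j then w i j else 0) := by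
        intro i hi j hj
        have hjr : j ∉ r.leaves := Finset.disjoint_left.mp hd hj
        have hil : i ∉ l.leaves := Finset.disjoint_right.mp hd hi
        simp only [lcaSize, if_neg (fun h : _ ∧ _ => hil h.1), if_neg (fun h : _ ∧ _ => hjr h.2)]
        rw [Finset.card_union_of_disjoint hd]
        split <;> push_cast <;> ring
      rw [Finset.sum_congr rfl fun i hi => Finset.sum_congr rfl fun j hj => h1 i hi j hj,
        Finset.sum_congr rfl fun i hi => Finset.sum_congr rfl fun j hj => h2 i hi j hj,
        Finset.sum_congr rfl fun i hi => Finset.sum_congr rfl fun j hj => h3 i hi j hj,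
        Finset.sum_congr rfl fun i hi => Finset.sum_congr rfl fun j hj => h4 i hi j hj]
      simp only [← Finset.mul_sum]
      have hc := cross_sum w hsym hd
      rw [cost, cost]
      nlinarith [hc]
    rw [key, cost_eq_mergeCostSum w hsym l hl, cost_eq_mergeCostSum w hsym r hr, mergeCostSum]

lemma mergeRevSum_eq (w : Fin n → Fin n → ℝ) (hsym : ∀ i j, w i j = w j i) (m : ℕ) :
    ∀ (T : HCTree (Fin n)), Proper T →
      mergeRevSum w m T = (m : ℝ) * pairsSum w T.leaves - mergeCostSum w T
  | leaf a, _ => by simp [mergeRevSum, mergeCostSum, pairsSum, leaves]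
  | node l r, ⟨hl, hr, hd⟩ => by
    rw [mergeRevSum, mergeCostSum, mergeRevSum_eq w hsym m l hl, mergeRevSum_eq w hsym m r hr,
      leaves, pairsSum_union w hsym hd]
    ring

lemma rev_eq_sub (w : Fin n → Fin n → ℝ) (T : HCTree (Fin n)) :
    rev w T = (T.leaves.card : ℝ) * pairsSum w T.leaves - cost w T := by
  rw [rev, cost, pairsSum, Finset.mul_sum, ← Finset.sum_sub_distrib]
  refine Finset.sum_congr rfl fun i _ => ?_
  rw [Finset.mul_sum, ← Finset.sum_sub_distrib]
  refine Finset.sum_congr rfl fun j _ => ?_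
  split <;> ring
noncomputable def phi (w : Fin n → Fin n → ℝ) (T : HCTree (Fin n)) : ℝ :=
  2 * mergeRevSum w n T - (mergeCostSum w T - 2 * pairsSum w T.leaves)
    - ((T.leaves.card : ℝ) - 1) * wSet w T.leaves T.leavesᶜ

lemma sim_key (w : Fin n → Fin n → ℝ) {A B C : Finset (Fin n)}
    (hA : A.Nonempty) (hB : B.Nonempty) (hC : C.Nonempty)
    (h : sim w A C ≤ sim w A B) :
    (B.card : ℝ) * wSet w A C ≤ (C.card : ℝ) * wSet w A B := by
  have ha : (0:ℝ) < A.card := by exact_mod_cast Finset.card_pos.mpr hA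
  have hb : (0:ℝ) < B.card := by exact_mod_cast Finset.card_pos.mpr hB
  have hc : (0:ℝ) < C.card := by exact_mod_cast Finset.card_pos.mpr hC
  rw [sim, sim, div_le_div_iff₀ (by positivity) (by positivity)] at h
  nlinarith [h]
lemma sim_comm (w : Fin n → Fin n → ℝ) (hsym : ∀ i j, w i j = w j i) (A B : Finset (Fin n)) :
    sim w A B = sim w B A := by
  rw [sim, sim, wSet_comm w hsym, mul_comm]

lemma forest_inv (w : Fin n → Fin n → ℝ) (hsym : ∀ i j, w i j = w j i)
    {F : Finset (HCTree (Fin n))} (hF : AvgLinkForest w F) :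
    (∀ T ∈ F, Proper T) ∧
    (∀ T ∈ F, T.leaves.Nonempty) ∧
    (∀ X ∈ F, ∀ Y ∈ F, X ≠ Y → Disjoint X.leaves Y.leaves) ∧
    (F.biUnion leaves = Finset.univ) ∧
    0 ≤ ∑ T ∈ F, phi w T := by
  induction hF with
  | init =>
    refine ⟨?_, ?_, ?_, ?_, ?_⟩
    · rintro T hT
      obtain ⟨a, -, rfl⟩ := Finset.mem_image.mp hT
      trivial
    · rintro T hT
      obtain ⟨a, -, rfl⟩ := Finset.mem_image.mp hT
      exact ⟨a, by simp [leaves]⟩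
    · rintro X hX Y hY hXY
      obtain ⟨a, -, rfl⟩ := Finset.mem_image.mp hX
      obtain ⟨b, -, rfl⟩ := Finset.mem_image.mp hY
      have : a ≠ b := fun h => hXY (by rw [h])
      simp [leaves, Finset.disjoint_singleton_left, this.symm, this]
    · ext x
      simp only [Finset.mem_biUnion, Finset.mem_image, Finset.mem_univ, iff_true]
      exact ⟨leaf x, ⟨x, ⟨trivial, rfl⟩⟩, by simp [leaves]⟩
    · have h0 : ∀ T ∈ Finset.univ.image (leaf : Fin n → HCTree (Fin n)), phi w T = 0 := by
        rintro T hT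
        obtain ⟨a, -, rfl⟩ := Finset.mem_image.mp hT
        simp [phi, mergeRevSum, mergeCostSum, pairsSum, leaves]
      rw [Finset.sum_congr rfl h0]
      simp
  | @merge F A B hF hA hB hAB hmax ih =>
    obtain ⟨ihP, ihNe, ihD, ihU, ihS⟩ := ih
    have hdAB : Disjoint A.leaves B.leaves := ihD A hA B hB hAB
    have hNA := ihNe A hA
    have hNB := ihNe B hB
    set F₂ := (F.erase A).erase B with hF₂
    have hBmem : B ∈ F.erase A := Finset.mem_erase.mpr ⟨hAB.symm, hB⟩
    have hmemF₂ : ∀ C ∈ F₂, C ∈ F ∧ C ≠ A ∧ C ≠ B := by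
      intro C hC
      obtain ⟨hCB, hCA⟩ := Finset.mem_erase.mp hC
      obtain ⟨hCA', hCF⟩ := Finset.mem_erase.mp hCA
      exact ⟨hCF, hCA', hCB⟩
    have hFeq : insert A (insert B F₂) = F := by
      rw [Finset.insert_erase hBmem, Finset.insert_erase hA]
    have hsplit : ∀ f : HCTree (Fin n) → ℝ, ∑ T ∈ F, f T = f A + f B + ∑ T ∈ F₂, f T := by
      intro f
      rw [← Finset.insert_erase hA, Finset.sum_insert (Finset.notMem_erase A F),
        ← Finset.insert_erase hBmem, Finset.sum_insert]
      · ring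
      · exact fun h => (Finset.mem_erase.mp h).1 rfl
    have hMleaves : (node A B).leaves = A.leaves ∪ B.leaves := rfl
    have hnotin : node A B ∉ F₂ := by
      intro h
      obtain ⟨hCF, hCA, hCB⟩ := hmemF₂ _ h
      have hd : Disjoint (node A B).leaves A.leaves := ihD _ hCF A hA hCA
      have hsub : A.leaves ⊆ (node A B).leaves := hMleaves ▸ Finset.subset_union_left
      obtain ⟨x, hx⟩ := hNA
      exact Finset.disjoint_left.mp hd (hsub hx) hx
    have hdisjM : ∀ C ∈ F₂, Disjoint (A.leaves ∪ B.leaves) C.leaves := by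
      intro C hC
      obtain ⟨hCF, hCA, hCB⟩ := hmemF₂ _ hC
      exact Finset.disjoint_union_left.mpr
        ⟨ihD A hA C hCF (fun h => hCA h.symm), ihD B hB C hCF (fun h => hCB h.symm)⟩
    have hUnew : A.leaves ∪ B.leaves ∪ F₂.biUnion leaves = Finset.univ := by
      rw [← ihU, ← hFeq, Finset.biUnion_insert, Finset.biUnion_insert, Finset.union_assoc]
    have hcompl : (A.leaves ∪ B.leaves)ᶜ = F₂.biUnion leaves := by
      ext x
      simp only [Finset.mem_compl]
      constructor
      · intro hx
        have hxu : x ∈ A.leaves ∪ B.leaves ∪ F₂.biUnion leaves := hUnew ▸ Finset.mem_univ x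
        rcases Finset.mem_union.mp hxu with h | h
        · exact absurd h hx
        · exact h
      · intro hx hx'
        obtain ⟨C, hC, hxC⟩ := Finset.mem_biUnion.mp hx
        exact Finset.disjoint_left.mp (hdisjM C hC) hx' hxC
    refine ⟨?_, ?_, ?_, ?_, ?_⟩
    · intro T hT
      rcases Finset.mem_insert.mp hT with rfl | hT
      · exact ⟨ihP A hA, ihP B hB, hdAB⟩
      · exact ihP T (hmemF₂ T hT).1
    · intro T hT
      rcases Finset.mem_insert.mp hT with rfl | hT
      · exact Finset.Nonempty.mono (hMleaves ▸ Finset.subset_union_left) hNA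
      · exact ihNe T (hmemF₂ T hT).1
    · intro X hX Y hY hXY
      rcases Finset.mem_insert.mp hX with rfl | hX <;>
        rcases Finset.mem_insert.mp hY with rfl | hY
      · exact absurd rfl hXY
      · exact hMleaves ▸ hdisjM Y hY
      · exact (hMleaves ▸ hdisjM X hX).symm
      · exact ihD X (hmemF₂ X hX).1 Y (hmemF₂ Y hY).1 hXY
    · rw [Finset.biUnion_insert, hMleaves]
      exact hUnew
    · rw [Finset.sum_insert hnotin]
      have hdBc : Disjoint B.leaves (A.leaves ∪ B.leaves)ᶜ :=
        (disjoint_compl_right).mono_left Finset.subset_union_right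
      have hdAc : Disjoint A.leaves (A.leaves ∪ B.leaves)ᶜ :=
        (disjoint_compl_right).mono_left Finset.subset_union_left
      have hAc : A.leavesᶜ = B.leaves ∪ (A.leaves ∪ B.leaves)ᶜ := by
        ext x
        simp only [Finset.mem_compl, Finset.mem_union]
        have hd : x ∈ A.leaves → x ∉ B.leaves := fun h => Finset.disjoint_left.mp hdAB h
        tauto
      have hBc : B.leavesᶜ = A.leaves ∪ (A.leaves ∪ B.leaves)ᶜ := by
        ext x
        simp only [Finset.mem_compl, Finset.mem_union]
        have hd : x ∈ A.leaves → x ∉ B.leaves := fun h => Finset.disjoint_left.mp hdAB h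
        tauto
      have e2 : phi w A = 2 * mergeRevSum w n A - (mergeCostSum w A - 2 * pairsSum w A.leaves)
          - ((A.leaves.card : ℝ) - 1) *
            (wSet w A.leaves B.leaves + wSet w A.leaves (A.leaves ∪ B.leaves)ᶜ) := by
        rw [phi, hAc, wSet_union_right w A.leaves hdBc]
      have e3 : phi w B = 2 * mergeRevSum w n B - (mergeCostSum w B - 2 * pairsSum w B.leaves)
          - ((B.leaves.card : ℝ) - 1) *
            (wSet w A.leaves B.leaves + wSet w B.leaves (A.leaves ∪ B.leaves)ᶜ) := by
        rw [phi, hBc, wSet_union_right w B.leaves hdAc, wSet_comm w hsym B.leaves A.leaves]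
      have hdelta : phi w (node A B) = phi w A + phi w B +
          (2 * ((n:ℝ) - (A.leaves.card : ℝ) - (B.leaves.card : ℝ)) * wSet w A.leaves B.leaves
            - (B.leaves.card : ℝ) * wSet w A.leaves (A.leaves ∪ B.leaves)ᶜ
            - (A.leaves.card : ℝ) * wSet w B.leaves (A.leaves ∪ B.leaves)ᶜ) := by
        rw [e2, e3, phi]
        simp only [mergeRevSum, mergeCostSum, hMleaves]
        rw [pairsSum_union w hsym hdAB, wSet_union_left w _ hdAB,
          Finset.card_union_of_disjoint hdAB]
        push_cast
        ring
      have pd : (↑F₂ : Set (HCTree (Fin n))).PairwiseDisjoint leaves := fun x hx y hy hxy =>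
        ihD x (hmemF₂ x (Finset.mem_coe.mp hx)).1 y (hmemF₂ y (Finset.mem_coe.mp hy)).1 hxy
      have hwAs : wSet w A.leaves (A.leaves ∪ B.leaves)ᶜ
          = ∑ C ∈ F₂, wSet w A.leaves C.leaves := by
        rw [hcompl, wSet_biUnion_right w _ _ pd]
      have hwBs : wSet w B.leaves (A.leaves ∪ B.leaves)ᶜ
          = ∑ C ∈ F₂, wSet w B.leaves C.leaves := by
        rw [hcompl, wSet_biUnion_right w _ _ pd]
      have hcards : ((n:ℝ)) = (A.leaves.card : ℝ) + (B.leaves.card : ℝ)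
          + ∑ C ∈ F₂, (C.leaves.card : ℝ) := by
        have hcb := Finset.card_biUnion (fun x hx y hy hxy => ihD x hx y hy hxy)
        have hun : (F.biUnion leaves).card = n := by
          rw [ihU, Finset.card_univ, Fintype.card_fin]
        rw [hcb] at hun
        have hs := hsplit (fun T => ((T.leaves.card : ℕ) : ℝ))
        have : ((∑ T ∈ F, T.leaves.card : ℕ) : ℝ) = (n : ℝ) := by rw [hun]
        push_cast at hs this ⊢
        linarith
      have hterm : ∀ C ∈ F₂, (B.leaves.card : ℝ) * wSet w A.leaves C.leaves
          + (A.leaves.card : ℝ) * wSet w B.leaves C.leaves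
          ≤ 2 * (C.leaves.card : ℝ) * wSet w A.leaves B.leaves := by
        intro C hC
        obtain ⟨hCF, hCA, hCB⟩ := hmemF₂ C hC
        have hNC := ihNe C hCF
        have h1 := sim_key w hNA hNB hNC (hmax A hA C hCF (fun h => hCA h.symm))
        have h2 : (A.leaves.card : ℝ) * wSet w B.leaves C.leaves
            ≤ (C.leaves.card : ℝ) * wSet w A.leaves B.leaves := by
          have hm := hmax B hB C hCF (fun h => hCB h.symm)
          rw [sim_comm w hsym A.leaves B.leaves] at hm
          have := sim_key w hNB hNA hNC hm
          rwa [wSet_comm w hsym B.leaves A.leaves] at this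
        linarith
      have hsum : (B.leaves.card : ℝ) * wSet w A.leaves (A.leaves ∪ B.leaves)ᶜ
          + (A.leaves.card : ℝ) * wSet w B.leaves (A.leaves ∪ B.leaves)ᶜ
          ≤ 2 * ((n:ℝ) - (A.leaves.card : ℝ) - (B.leaves.card : ℝ))
            * wSet w A.leaves B.leaves := by
        rw [hwAs, hwBs, Finset.mul_sum, Finset.mul_sum, ← Finset.sum_add_distrib]
        have hnab : (n:ℝ) - (A.leaves.card : ℝ) - (B.leaves.card : ℝ)
            = ∑ C ∈ F₂, (C.leaves.card : ℝ) := by rw [hcards]; ring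
        rw [hnab, Finset.mul_sum, Finset.sum_mul]
        exact Finset.sum_le_sum hterm
      have hS' := ihS
      rw [hsplit (phi w)] at hS'
      rw [hdelta]
      linarith
end HCTree
open HCTree in
/-- any average-link tree of order `n` has revenue at least
`((n-2)/3) · Σ_{i<j} w(i,j)`. -/
theorem average_link_revenue_lower_bound {n : ℕ} (w : Fin n → Fin n → ℝ)
    (hsym : ∀ i j, w i j = w j i) (hnonneg : ∀ i j, 0 ≤ w i j)
    (T : HCTree (Fin n)) (hT : AvgLinkTree w T) :
    T.rev w ≥ ((n : ℝ) - 2) / 3 * ∑ i : Fin n, ∑ j : Fin n, if i < j then w i j else 0 := by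
  obtain ⟨hP, hNe, hD, hU, hS⟩ := forest_inv w hsym hT
  have hluniv : T.leaves = Finset.univ := by
    rw [← hU]
    exact Finset.singleton_biUnion.symm
  have hPT : Proper T := hP T (Finset.mem_singleton_self T)
  have hphi : 0 ≤ phi w T := by simpa using hS
  have hcard : (T.leaves.card : ℝ) = n := by rw [hluniv, Finset.card_univ, Fintype.card_fin]
  have hcost := cost_eq_mergeCostSum w hsym T hPT
  have hmr := mergeRevSum_eq w hsym n T hPT
  have hrev := rev_eq_sub w T
  have hwc : wSet w T.leaves T.leavesᶜ = 0 := by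
    rw [hluniv, Finset.compl_univ]
    simp [wSet]
  rw [phi, hwc, mul_zero, sub_zero, hmr] at hphi
  have hps : pairsSum w T.leaves = ∑ i : Fin n, ∑ j : Fin n, if i < j then w i j else 0 := by
    rw [hluniv]
    rfl
  rw [ge_iff_le, ← hps]
  rw [hcard, hcost] at hrev
  linarith
end

section
/- For every n ≥ 1 and any two HC trees T₁ and T₂ of order n, there is a finite sequence of interchange operations transforming T₁ into T₂; hence the interchange distance idist(T₁,T₂) is well defined. -/
namespace HCTree

variable {α : Type} [DecidableEq α]

/-! ### Auxiliary lemmas for interchange reachability -/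

theorem aux_leaves_nonempty (T : HCTree α) : T.leaves.Nonempty := by
  induction T with
  | leaf a => exact ⟨a, by simp [leaves]⟩
  | node l r ihl ihr => exact ihl.mono (by simp [leaves, Finset.subset_union_left])

theorem TEq.rfl' : ∀ T : HCTree α, TEq T T := by
  intro T
  induction T with
  | leaf a => exact TEq.leaf a
  | node l r ihl ihr => exact TEq.node ihl ihr

theorem TEq.symm' {T T' : HCTree α} (h : TEq T T') : TEq T' T := by
  induction h with
  | leaf a => exact TEq.leaf a
  | node h1 h2 ih1 ih2 => exact TEq.node ih1 ih2
  | swap h1 h2 ih1 ih2 => exact TEq.swap ih2 ih1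

theorem TEq.trans' {T₁ T₂ T₃ : HCTree α} (h : TEq T₁ T₂) (h' : TEq T₂ T₃) : TEq T₁ T₃ := by
  induction h generalizing T₃ with
  | leaf a => exact h'
  | node h1 h2 ih1 ih2 =>
    cases h' with
    | node g1 g2 => exact TEq.node (ih1 g1) (ih2 g2)
    | swap g1 g2 => exact TEq.swap (ih1 g1) (ih2 g2)
  | swap h1 h2 ih1 ih2 =>
    cases h' with
    | node g1 g2 => exact TEq.swap (ih1 g2) (ih2 g1)
    | swap g1 g2 => exact TEq.node (ih1 g2) (ih2 g1)

theorem aux_teq_leaves {T T' : HCTree α} (h : TEq T T') : T.leaves = T'.leaves := by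
  induction h with
  | leaf a => rfl
  | node h1 h2 ih1 ih2 => simp [leaves, ih1, ih2]
  | swap h1 h2 ih1 ih2 => simp [leaves, ih1, ih2, Finset.union_comm]

theorem aux_teq_proper {T T' : HCTree α} (h : TEq T T') (hp : T.Proper) : T'.Proper := by
  induction h with
  | leaf a => trivial
  | node h1 h2 ih1 ih2 =>
    obtain ⟨p1, p2, d⟩ := hp
    exact ⟨ih1 p1, ih2 p2, by rwa [← aux_teq_leaves h1, ← aux_teq_leaves h2]⟩
  | swap h1 h2 ih1 ih2 =>
    obtain ⟨p1, p2, d⟩ := hp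
    exact ⟨ih2 p2, ih1 p1, by
      rw [← aux_teq_leaves h2, ← aux_teq_leaves h1]; exact d.symm⟩

theorem aux_fill_leaves {K : Ctx α} {t t' : HCTree α} (h : t.leaves = t'.leaves) :
    (K.fill t).leaves = (K.fill t').leaves := by
  induction K with
  | hole => exact h
  | nodeL K r ih => simp [Ctx.fill, leaves, ih]
  | nodeR l K ih => simp [Ctx.fill, leaves, ih]

theorem aux_fill_proper {K : Ctx α} {t t' : HCTree α} (h : t.leaves = t'.leaves)
    (hp' : t'.Proper) (hp : (K.fill t).Proper) : (K.fill t').Proper := by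
  induction K with
  | hole => exact hp'
  | nodeL K r ih =>
    obtain ⟨p1, p2, d⟩ := hp
    exact ⟨ih p1, p2, by rwa [← aux_fill_leaves h]⟩
  | nodeR l K ih =>
    obtain ⟨p1, p2, d⟩ := hp
    exact ⟨p1, ih p2, by rwa [← aux_fill_leaves h]⟩

theorem aux_abc_leaves1 (A B C : HCTree α) :
    (node (node A B) C).leaves = (node (node A C) B).leaves := by
  simp [leaves, Finset.union_assoc, Finset.union_comm B.leaves C.leaves]

theorem aux_abc_leaves2 (A B C : HCTree α) :
    (node (node A B) C).leaves = (node (node C B) A).leaves := by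
  ext y; simp only [leaves, Finset.mem_union]; tauto

theorem aux_abc_proper1 {A B C : HCTree α} (h : (node (node A B) C).Proper) :
    (node (node A C) B).Proper := by
  obtain ⟨⟨pA, pB, dAB⟩, pC, d⟩ := h
  simp only [Proper, leaves] at *
  rw [Finset.disjoint_union_left] at d
  refine ⟨⟨pA, pC, d.1⟩, pB, ?_⟩
  rw [Finset.disjoint_union_left]
  exact ⟨dAB, d.2.symm⟩

theorem aux_abc_proper2 {A B C : HCTree α} (h : (node (node A B) C).Proper) :
    (node (node C B) A).Proper := by
  obtain ⟨⟨pA, pB, dAB⟩, pC, d⟩ := h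
  simp only [Proper, leaves] at *
  rw [Finset.disjoint_union_left] at d
  refine ⟨⟨pC, pB, d.2.symm⟩, pA, ?_⟩
  rw [Finset.disjoint_union_left]
  exact ⟨d.1.symm, dAB.symm⟩

theorem aux_fill_proper_sub {K : Ctx α} {t : HCTree α} (hp : (K.fill t).Proper) : t.Proper := by
  induction K with
  | hole => exact hp
  | nodeL K r ih => exact ih hp.1
  | nodeR l K ih => exact ih hp.2.1

theorem aux_interchange_symm {T T' : HCTree α} (h : Interchange T T') : Interchange T' T := by
  obtain ⟨K, A, B, C, h1, h2 | h2⟩ := h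
  · exact ⟨K, A, C, B, h2, Or.inl h1⟩
  · exact ⟨K, C, B, A, h2, Or.inr h1⟩

theorem aux_interchange_leaves {T T' : HCTree α} (h : Interchange T T') :
    T.leaves = T'.leaves := by
  obtain ⟨K, A, B, C, h1, h2 | h2⟩ := h <;> subst h1 <;> subst h2
  · exact aux_fill_leaves (aux_abc_leaves1 A B C)
  · exact aux_fill_leaves (aux_abc_leaves2 A B C)

theorem aux_interchange_proper {T T' : HCTree α} (h : Interchange T T') (hp : T.Proper) :
    T'.Proper := by
  obtain ⟨K, A, B, C, h1, h2 | h2⟩ := h <;> subst h1 <;> subst h2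
  · exact aux_fill_proper (aux_abc_leaves1 A B C)
      (aux_abc_proper1 (aux_fill_proper_sub hp)) hp
  · exact aux_fill_proper (aux_abc_leaves2 A B C)
      (aux_abc_proper2 (aux_fill_proper_sub hp)) hp

theorem aux_istep_symm {T T' : HCTree α} (h : IStep T T') : IStep T' T := by
  obtain ⟨S, S', h1, h2, h3⟩ := h
  exact ⟨S', S, h3.symm', aux_interchange_symm h2, h1.symm'⟩

theorem aux_istep_leaves {T T' : HCTree α} (h : IStep T T') : T.leaves = T'.leaves := by
  obtain ⟨S, S', h1, h2, h3⟩ := h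
  rw [aux_teq_leaves h1, aux_interchange_leaves h2, aux_teq_leaves h3]

theorem aux_istep_proper {T T' : HCTree α} (h : IStep T T') (hp : T.Proper) : T'.Proper :=
  aux_teq_proper h.choose_spec.choose_spec.2.2
    (aux_interchange_proper h.choose_spec.choose_spec.2.1
      (aux_teq_proper h.choose_spec.choose_spec.1 hp))

theorem aux_teq_istep {T₀ T₁ T₂ : HCTree α} (h : TEq T₀ T₁) (h' : IStep T₁ T₂) :
    IStep T₀ T₂ := by
  obtain ⟨S, S', h1, h2, h3⟩ := h'
  exact ⟨S, S', h.trans' h1, h2, h3⟩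

/-- Reachability via interchange steps up to unordered equality. -/
def Reach (T T' : HCTree α) : Prop :=
  ∃ S : HCTree α, Relation.ReflTransGen IStep T S ∧ TEq S T'

theorem Reach.refl' (T : HCTree α) : Reach T T :=
  ⟨T, Relation.ReflTransGen.refl, TEq.rfl' T⟩

theorem Reach.of_teq {T T' : HCTree α} (h : TEq T T') : Reach T T' :=
  ⟨T, Relation.ReflTransGen.refl, h⟩

theorem Reach.of_istep {T T' : HCTree α} (h : IStep T T') : Reach T T' :=
  ⟨T', Relation.ReflTransGen.single h, TEq.rfl' T'⟩

theorem Reach.trans' {T₁ T₂ T₃ : HCTree α} (h : Reach T₁ T₂) (h' : Reach T₂ T₃) :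
    Reach T₁ T₃ := by
  obtain ⟨S, hTS, hS⟩ := h
  obtain ⟨S', hT'S', hS'⟩ := h'
  rcases Relation.ReflTransGen.cases_head hT'S' with rfl | ⟨x, hx, hrest⟩
  · exact ⟨S, hTS, hS.trans' hS'⟩
  · exact ⟨S', hTS.trans (Relation.ReflTransGen.head (aux_teq_istep hS hx) hrest), hS'⟩

theorem Reach.symm' {T T' : HCTree α} (h : Reach T T') : Reach T' T := by
  obtain ⟨S, hTS, hS⟩ := h
  have hST : Relation.ReflTransGen IStep S T :=
    by
      clear hS
      induction hTS with
      | refl => exact Relation.ReflTransGen.refl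
      | tail _ b c => exact c.head (aux_istep_symm b)
  rcases Relation.ReflTransGen.cases_head hST with heq | ⟨x, hx, hrest⟩
  · exact ⟨T', Relation.ReflTransGen.refl, heq ▸ hS.symm'⟩
  · exact ⟨T, Relation.ReflTransGen.head (aux_teq_istep hS.symm' hx) hrest, TEq.rfl' T⟩

theorem aux_istep_nodeL {l l' : HCTree α} (r : HCTree α) (h : IStep l l') :
    IStep (node l r) (node l' r) := by
  obtain ⟨S, S', h1, h2, h3⟩ := h
  refine ⟨node S r, node S' r, TEq.node h1 (TEq.rfl' r), ?_, TEq.node h3 (TEq.rfl' r)⟩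
  obtain ⟨K, A, B, C, e1, e2 | e2⟩ := h2
  · exact ⟨Ctx.nodeL K r, A, B, C, by rw [e1]; rfl, Or.inl (by rw [e2]; rfl)⟩
  · exact ⟨Ctx.nodeL K r, A, B, C, by rw [e1]; rfl, Or.inr (by rw [e2]; rfl)⟩

theorem Reach.nodeL {l l' : HCTree α} (r : HCTree α) (h : Reach l l') :
    Reach (node l r) (node l' r) := by
  obtain ⟨S, hTS, hS⟩ := h
  exact ⟨node S r,
    Relation.ReflTransGen.lift (fun t => node t r) (fun _ _ => aux_istep_nodeL r) _ _ hTS,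
    TEq.node hS (TEq.rfl' r)⟩

theorem Reach.nodeR {r r' : HCTree α} (l : HCTree α) (h : Reach r r') :
    Reach (node l r) (node l r') :=
  (Reach.of_teq (TEq.swap (TEq.rfl' l) (TEq.rfl' r))).trans'
    (((Reach.nodeL l h)).trans' (Reach.of_teq (TEq.swap (TEq.rfl' r') (TEq.rfl' l))))

theorem aux_rtg_leaves {T S : HCTree α} (h : Relation.ReflTransGen IStep T S) :
    T.leaves = S.leaves := by
  induction h with
  | refl => rfl
  | tail _ hstep ih => rw [ih, aux_istep_leaves hstep]

theorem aux_rtg_proper {T S : HCTree α} (h : Relation.ReflTransGen IStep T S)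
    (hp : T.Proper) : S.Proper := by
  induction h with
  | refl => exact hp
  | tail _ hstep ih => exact aux_istep_proper hstep ih

theorem aux_reach_leaves {T T' : HCTree α} (h : Reach T T') : T.leaves = T'.leaves := by
  obtain ⟨S, hTS, hS⟩ := h
  rw [aux_rtg_leaves hTS, aux_teq_leaves hS]

theorem aux_reach_proper {T T' : HCTree α} (h : Reach T T') (hp : T.Proper) : T'.Proper := by
  obtain ⟨S, hTS, hS⟩ := h
  exact aux_teq_proper hS (aux_rtg_proper hTS hp)

/-- Extraction: any non-leaf tree can be rearranged so that a chosen leaf is a child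
of the root. -/
theorem aux_extract : ∀ (T : HCTree α) (x : α), x ∈ T.leaves →
    (∀ a : α, T ≠ leaf a) → ∃ R : HCTree α, Reach T (node (leaf x) R) := by
  intro T
  induction T with
  | leaf a => intro x _ hne; exact absurd rfl (hne a)
  | node l r ihl ihr =>
    intro x hx _
    simp only [leaves, Finset.mem_union] at hx
    rcases hx with hx | hx
    · cases l with
      | leaf y =>
        simp only [leaves, Finset.mem_singleton] at hx
        subst hx
        exact ⟨r, Reach.refl' _⟩
      | node A B =>
        obtain ⟨R₁, hR₁⟩ := ihl x hx (by intro a h; cases h)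
        refine ⟨node r R₁, (Reach.nodeL r hR₁).trans' (Reach.of_istep ?_)⟩
        refine ⟨node (node (leaf x) R₁) r, node (node r R₁) (leaf x), TEq.rfl' _,
          ⟨Ctx.hole, leaf x, R₁, r, rfl, Or.inr rfl⟩,
          TEq.swap (TEq.rfl' _) (TEq.rfl' _)⟩
    · cases r with
      | leaf y =>
        simp only [leaves, Finset.mem_singleton] at hx
        subst hx
        exact ⟨l, Reach.of_teq (TEq.swap (TEq.rfl' _) (TEq.rfl' _))⟩
      | node A B =>
        obtain ⟨R₁, hR₁⟩ := ihr x hx (by intro a h; cases h)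
        refine ⟨node l R₁, (Reach.nodeR l hR₁).trans' (Reach.of_istep ?_)⟩
        refine ⟨node (node (leaf x) R₁) l, node (node l R₁) (leaf x),
          TEq.swap (TEq.rfl' _) (TEq.rfl' _),
          ⟨Ctx.hole, leaf x, R₁, l, rfl, Or.inr rfl⟩,
          TEq.swap (TEq.rfl' _) (TEq.rfl' _)⟩

theorem aux_card_one {T : HCTree α} (hp : T.Proper) {a : α} (h : T.leaves = {a}) :
    T = leaf a := by
  cases T with
  | leaf b => simp only [leaves, Finset.singleton_inj] at h; rw [h]
  | node l r =>
    exfalso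
    obtain ⟨p1, p2, d⟩ := hp
    obtain ⟨x, hx⟩ := aux_leaves_nonempty l
    obtain ⟨y, hy⟩ := aux_leaves_nonempty r
    have hxl : x ∈ leaves (node l r) := by simp [leaves, Finset.mem_union, hx]
    have hyl : y ∈ leaves (node l r) := by simp [leaves, Finset.mem_union, hy]
    rw [h, Finset.mem_singleton] at hxl hyl
    subst hxl; subst hyl
    exact Finset.disjoint_left.mp d hx hy

/-- Main lemma: any two proper trees with the same leaf set are reachable from
one another. -/
theorem aux_main : ∀ (k : ℕ) (T₁ T₂ : HCTree α), T₁.leaves.card ≤ k → T₁.Proper → T₂.Proper →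
    T₁.leaves = T₂.leaves → Reach T₁ T₂ := by
  intro k
  induction k with
  | zero =>
    intro T₁ _ hcard _ _ _
    have h := Finset.card_pos.mpr (aux_leaves_nonempty T₁)
    omega
  | succ k ih =>
    intro T₁ T₂ hcard h₁p h₂p hL
    obtain ⟨x, hx⟩ := aux_leaves_nonempty T₁
    by_cases hone : T₁.leaves = {x}
    · have e₁ : T₁ = leaf x := aux_card_one h₁p hone
      have e₂ : T₂ = leaf x := aux_card_one h₂p (hL ▸ hone)
      rw [e₁, e₂]; exact Reach.refl' _
    · -- both trees are non-leaves
      have hne₁ : ∀ a : α, T₁ ≠ leaf a := by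
        intro a h; rw [h] at hx hone
        simp only [leaves, Finset.mem_singleton] at hx
        subst hx; exact hone rfl
      have hne₂ : ∀ a : α, T₂ ≠ leaf a := by
        intro a h
        rw [h] at hL
        simp only [leaves] at hL
        apply hone
        rw [hL] at hx ⊢
        simp only [Finset.mem_singleton] at hx
        subst hx; rfl
      obtain ⟨R₁, hR₁⟩ := aux_extract T₁ x hx hne₁
      obtain ⟨R₂, hR₂⟩ := aux_extract T₂ x (hL ▸ hx) hne₂
      have h₁p' := aux_reach_proper hR₁ h₁p
      have h₂p' := aux_reach_proper hR₂ h₂p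
      have hL₁ := aux_reach_leaves hR₁
      have hL₂ := aux_reach_leaves hR₂
      have hR₁L : R₁.leaves = T₁.leaves.erase x := by
        have hd : x ∉ R₁.leaves := by
          have := h₁p'.2.2
          simp only [leaves] at this
          exact Finset.disjoint_left.mp this (Finset.mem_singleton_self x)
        ext y
        simp only [Finset.mem_erase]
        constructor
        · intro hy
          refine ⟨fun h => hd (h ▸ hy), ?_⟩
          rw [hL₁]; simp [leaves, hy]
        · intro ⟨hyx, hy⟩
          rw [hL₁] at hy
          simp only [leaves, Finset.mem_union, Finset.mem_singleton] at hy
          tauto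
      have hR₂L : R₂.leaves = T₁.leaves.erase x := by
        have hd : x ∉ R₂.leaves := by
          have := h₂p'.2.2
          simp only [leaves] at this
          exact Finset.disjoint_left.mp this (Finset.mem_singleton_self x)
        ext y
        simp only [Finset.mem_erase]
        constructor
        · intro hy
          refine ⟨fun h => hd (h ▸ hy), ?_⟩
          rw [hL, hL₂]; simp [leaves, hy]
        · intro ⟨hyx, hy⟩
          rw [hL, hL₂] at hy
          simp only [leaves, Finset.mem_union, Finset.mem_singleton] at hy
          tauto
      have hcard' : R₁.leaves.card ≤ k := by
        rw [hR₁L, Finset.card_erase_of_mem hx]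
        omega
      have hmid : Reach R₁ R₂ :=
        ih R₁ R₂ hcard' h₁p'.2.1 h₂p'.2.1 (hR₁L.trans hR₂L.symm)
      exact hR₁.trans' ((Reach.nodeR (leaf x) hmid).trans' hR₂.symm')

end HCTree

open HCTree in
/-- any HC tree of order `n` can be transformed into any other by
a finite sequence of interchange operations (as unordered trees); hence the
interchange distance is well defined. -/
theorem interchange_reachability {n : ℕ} (hn : 1 ≤ n)
    (T₁ T₂ : HCTree (Fin n))
    (h₁p : T₁.Proper) (h₁ : T₁.leaves = Finset.univ)
    (h₂p : T₂.Proper) (h₂ : T₂.leaves = Finset.univ) :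
    ∃ S : HCTree (Fin n), Relation.ReflTransGen IStep T₁ S ∧ TEq S T₂ :=
  aux_main T₁.leaves.card T₁ T₂ le_rfl h₁p h₂p (h₁.trans h₂.symm)
end

section
/- Let w : {1,…,n}×{1,…,n} → ℝ≥0 be the constant similarity function with w(i,j) = 1 for all pairs i ≠ j. Then every HC tree of order n is locally optimal with respect to the interchange operation. -/
namespace HCTree

variable {α : Type} [DecidableEq α]

lemma TEq.leaves_eq {T S : HCTree α} (h : TEq T S) : T.leaves = S.leaves := by
  induction h with
  | leaf a => rfl
  | node h1 h2 ih1 ih2 => simp [leaves, ih1, ih2]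
  | swap h1 h2 ih1 ih2 => simp [leaves, ih1, ih2, Finset.union_comm]

lemma TEq.proper {T S : HCTree α} (h : TEq T S) (hp : T.Proper) : S.Proper := by
  induction h with
  | leaf a => trivial
  | node h1 h2 ih1 ih2 =>
      obtain ⟨p1, p2, p3⟩ := hp
      exact ⟨ih1 p1, ih2 p2, by rw [← h1.leaves_eq, ← h2.leaves_eq]; exact p3⟩
  | swap h1 h2 ih1 ih2 =>
      obtain ⟨p1, p2, p3⟩ := hp
      exact ⟨ih2 p2, ih1 p1, by rw [← h2.leaves_eq, ← h1.leaves_eq]; exact p3.symm⟩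

lemma fill_leaves {X Y : HCTree α} (K : Ctx α) (h : X.leaves = Y.leaves) :
    (K.fill X).leaves = (K.fill Y).leaves := by
  induction K with
  | hole => exact h
  | nodeL K r ih => simp [Ctx.fill, leaves, ih]
  | nodeR l K ih => simp [Ctx.fill, leaves, ih]

lemma fill_proper {X Y : HCTree α} (K : Ctx α) (h : X.leaves = Y.leaves)
    (hY : Y.Proper) (hX : (K.fill X).Proper) : (K.fill Y).Proper := by
  induction K with
  | hole => exact hY
  | nodeL K r ih =>
      obtain ⟨p1, p2, p3⟩ := hX
      exact ⟨ih p1, p2, by rw [← fill_leaves K h]; exact p3⟩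
  | nodeR l K ih =>
      obtain ⟨p1, p2, p3⟩ := hX
      exact ⟨p1, ih p2, by rw [← fill_leaves K h]; exact p3⟩

lemma card_leaves_node {l r : HCTree α} (h : Disjoint l.leaves r.leaves) :
    (node l r).leaves.card = l.leaves.card + r.leaves.card :=
  Finset.card_union_of_disjoint h

lemma lsum_eq [LinearOrder α] (T : HCTree α) (hp : T.Proper) :
    (∑ i ∈ T.leaves, ∑ j ∈ T.leaves, if i < j then (T.lcaSize i j : ℝ) else 0)
      = ((T.leaves.card : ℝ)^3 - T.leaves.card) / 3 := by
  induction T with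
  | leaf a => simp [leaves, lcaSize, Finset.filter_eq_empty_iff]
  | node l r ihl ihr =>
      obtain ⟨hl, hr, hd⟩ := hp
      have hLL : ∀ i ∈ l.leaves, ∀ j ∈ l.leaves,
          (node l r).lcaSize i j = l.lcaSize i j := by
        intro i hi j hj; simp [lcaSize, hi, hj]
      have hRR : ∀ i ∈ r.leaves, ∀ j ∈ r.leaves,
          (node l r).lcaSize i j = r.lcaSize i j := by
        intro i hi j hj
        have hi' : i ∉ l.leaves := fun h => (Finset.disjoint_left.mp hd) h hi
        simp [lcaSize, hi', hi, hj]
      have hLR : ∀ i ∈ l.leaves, ∀ j ∈ r.leaves,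
          (node l r).lcaSize i j = (l.leaves ∪ r.leaves).card := by
        intro i hi j hj
        have hj' : j ∉ l.leaves := fun h => (Finset.disjoint_left.mp hd) h hj
        have hi' : i ∉ r.leaves := Finset.disjoint_left.mp hd hi
        simp [lcaSize, hi', hj']
      have hRL : ∀ i ∈ r.leaves, ∀ j ∈ l.leaves,
          (node l r).lcaSize i j = (l.leaves ∪ r.leaves).card := by
        intro i hi j hj
        have hi' : i ∉ l.leaves := fun h => (Finset.disjoint_left.mp hd) h hi
        have hj' : j ∉ r.leaves := fun h => (Finset.disjoint_right.mp hd) h hj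
        simp [lcaSize, hi', hj']
      have hleaves : (node l r).leaves = l.leaves ∪ r.leaves := rfl
      set a : ℕ := l.leaves.card with ha
      set b : ℕ := r.leaves.card with hb
      have hc : (l.leaves ∪ r.leaves).card = a + b := Finset.card_union_of_disjoint hd
      rw [hleaves]
      rw [Finset.sum_union hd]
      have split1 : ∀ i ∈ l.leaves,
          (∑ j ∈ l.leaves ∪ r.leaves, if i < j then ((node l r).lcaSize i j : ℝ) else 0)
          = (∑ j ∈ l.leaves, if i < j then (l.lcaSize i j : ℝ) else 0)
            + (∑ j ∈ r.leaves, if i < j then ((a + b : ℕ) : ℝ) else 0) := by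
        intro i hi
        rw [Finset.sum_union hd]
        congr 1
        · exact Finset.sum_congr rfl fun j hj => by rw [hLL i hi j hj]
        · exact Finset.sum_congr rfl fun j hj => by rw [hLR i hi j hj, hc]
      have split2 : ∀ i ∈ r.leaves,
          (∑ j ∈ l.leaves ∪ r.leaves, if i < j then ((node l r).lcaSize i j : ℝ) else 0)
          = (∑ j ∈ l.leaves, if i < j then ((a + b : ℕ) : ℝ) else 0)
            + (∑ j ∈ r.leaves, if i < j then (r.lcaSize i j : ℝ) else 0) := by
        intro i hi
        rw [Finset.sum_union hd]
        congr 1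
        · exact Finset.sum_congr rfl fun j hj => by rw [hRL i hi j hj, hc]
        · exact Finset.sum_congr rfl fun j hj => by rw [hRR i hi j hj]
      rw [Finset.sum_congr rfl split1, Finset.sum_congr rfl split2,
        Finset.sum_add_distrib, Finset.sum_add_distrib]
      have cross : (∑ i ∈ l.leaves, ∑ j ∈ r.leaves, if i < j then ((a + b : ℕ) : ℝ) else 0)
          + (∑ i ∈ r.leaves, ∑ j ∈ l.leaves, if i < j then ((a + b : ℕ) : ℝ) else 0)
          = (a : ℝ) * b * (a + b) := by
        rw [Finset.sum_comm (s := r.leaves)]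
        rw [← Finset.sum_add_distrib]
        have : ∀ i ∈ l.leaves, ((∑ j ∈ r.leaves, if i < j then ((a + b : ℕ) : ℝ) else 0)
            + ∑ j ∈ r.leaves, if j < i then ((a + b : ℕ) : ℝ) else 0)
            = (b : ℝ) * (a + b) := by
          intro i hi
          rw [← Finset.sum_add_distrib]
          have : ∀ j ∈ r.leaves, ((if i < j then ((a + b : ℕ) : ℝ) else 0)
              + if j < i then ((a + b : ℕ) : ℝ) else 0) = ((a + b : ℕ) : ℝ) := by
            intro j hj
            have hne : i ≠ j := fun h => Finset.disjoint_left.mp hd hi (h ▸ hj)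
            rcases lt_or_gt_of_ne hne with h | h
            · simp [h, not_lt.mpr h.le]
            · simp [h, not_lt.mpr h.le]
          rw [Finset.sum_congr rfl this, Finset.sum_const, hb, nsmul_eq_mul]
          push_cast; ring
        rw [Finset.sum_congr rfl this, Finset.sum_const, ha, nsmul_eq_mul]
        push_cast; ring
      rw [ihl hl] at *
      rw [ihr hr]
      rw [hc]
      have := cross
      push_cast at this ⊢
      linarith [this]

lemma fill_proper_sub {X : HCTree α} (K : Ctx α) (h : (K.fill X).Proper) : X.Proper := by
  induction K with
  | hole => exact h
  | nodeL K r ih => exact ih h.1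
  | nodeR l K ih => exact ih h.2.1

lemma rev_const {n : ℕ} (w : Fin n → Fin n → ℝ) (hw : ∀ i j, i ≠ j → w i j = 1)
    (T : HCTree (Fin n)) (hp : T.Proper) :
    rev w T = (∑ i ∈ T.leaves, ∑ j ∈ T.leaves, if i < j then (T.leaves.card : ℝ) else 0)
      - ((T.leaves.card : ℝ)^3 - T.leaves.card) / 3 := by
  rw [← lsum_eq T hp]
  unfold rev
  rw [← Finset.sum_sub_distrib]
  refine Finset.sum_congr rfl fun i hi => ?_
  rw [← Finset.sum_sub_distrib]
  refine Finset.sum_congr rfl fun j hj => ?_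
  by_cases h : i < j
  · simp only [if_pos h, hw i j (ne_of_lt h)]; ring
  · simp [h]

end HCTree

open HCTree in
/-- for the constant similarity function (`w(i,j) = 1` for `i ≠ j`),
every HC tree of order `n` is locally optimal. -/
theorem const_similarity_locally_optimal {n : ℕ} (w : Fin n → Fin n → ℝ)
    (hw : ∀ i j, i ≠ j → w i j = 1)
    (T : HCTree (Fin n)) (hproper : T.Proper) (horder : T.leaves = Finset.univ) :
    T.LocalOpt w := by
  intro S S' hTS hint
  obtain ⟨K, A, B, C, hS, hS'⟩ := hint
  have hSp : S.Proper := hTS.proper hproper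
  have hSl : S.leaves = T.leaves := hTS.leaves_eq.symm
  have hDp : (node (node A B) C).Proper := fill_proper_sub K (hS ▸ hSp)
  obtain ⟨⟨pA, pB, dAB⟩, pC, dABC⟩ := hDp
  have dAC : Disjoint A.leaves C.leaves := (Finset.disjoint_union_left.mp dABC).1
  have dBC : Disjoint B.leaves C.leaves := (Finset.disjoint_union_left.mp dABC).2
  have key : ∀ E : HCTree (Fin n), E.Proper →
      E.leaves = (node (node A B) C).leaves → rev w (K.fill E) ≤ rev w T := by
    intro E hEp hEl
    have hfl : (K.fill E).leaves = T.leaves := by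
      rw [fill_leaves K hEl, ← hS, hSl]
    have hfp : (K.fill E).Proper := fill_proper K hEl.symm hEp (hS ▸ hSp)
    rw [rev_const w hw (K.fill E) hfp, rev_const w hw T hproper, hfl]
  rcases hS' with h | h
  · rw [h]
    refine key _ ⟨⟨pA, pC, dAC⟩, pB, ?_⟩ ?_
    · exact Finset.disjoint_union_left.mpr ⟨dAB, dBC.symm⟩
    · show (A.leaves ∪ C.leaves) ∪ B.leaves = (A.leaves ∪ B.leaves) ∪ C.leaves
      ac_rfl
  · rw [h]
    refine key _ ⟨⟨pC, pB, dBC.symm⟩, pA, ?_⟩ ?_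
    · exact Finset.disjoint_union_left.mpr ⟨dAC.symm, dAB.symm⟩
    · show (C.leaves ∪ B.leaves) ∪ A.leaves = (A.leaves ∪ B.leaves) ∪ C.leaves
      ac_rfl
end
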